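/- arXiv:2012.02633 — 2 statements merged into one kernel-verified Lean document; each statement's English description precedes it below -/
import Mathlib

section
/- The function K_cv(x) = ρ * arctan(x/λ) / (π/2 - arctan(x/λ)) with ρ, λ > 0 is strictly convex on (0,∞), i.e., its second derivative is strictly positive for all x > 0. -/
/-!
Writing `u = π/2 - arctan (x/λ)`, the function is `ρπ/(2u) - ρ`, so its derivative is
`ρπλ / (2 (λ² + x²) u²)`, and differentiating once more gives
`ρπλ · u (λ - x u) / ((λ² + x²) u²)²`. For `x > 0` we have `u = arctan (λ/x) < λ/x`, so
`λ - x u > 0` and the second derivative is positive; strict convexity follows.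
-/

open Real Set

theorem Real.arctan_lt_self {t : ℝ} (ht : 0 < t) : arctan t < t := by
  simpa only [tan_arctan] using lt_tan (arctan_pos.2 ht) (arctan_lt_pi_div_two t)

theorem pi_div_two_sub_arctan_pos (y : ℝ) : 0 < π / 2 - arctan y :=
  sub_pos.2 (arctan_lt_pi_div_two y)

theorem mul_pi_div_two_sub_arctan_div_lt {lam x : ℝ} (hlam : 0 < lam) (hx : 0 < x) :
    x * (π / 2 - arctan (x / lam)) < lam := by
  rw [← arctan_inv_of_pos (div_pos hx hlam), inv_div]
  calc x * arctan (lam / x) < x * (lam / x) :=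
        mul_lt_mul_of_pos_left (arctan_lt_self (div_pos hlam hx)) hx
    _ = lam := mul_div_cancel₀ lam hx.ne'

theorem hasDerivAt_arctan_div (lam x : ℝ) :
    HasDerivAt (fun x => arctan (x / lam)) (lam / (lam ^ 2 + x ^ 2)) x := by
  refine ((hasDerivAt_id' x).div_const lam).arctan.congr_deriv ?_
  rcases eq_or_ne lam 0 with rfl | hlam
  · simp
  · field_simp

noncomputable def Kcv (ρ lam x : ℝ) : ℝ :=
  ρ * arctan (x / lam) / (π / 2 - arctan (x / lam))

section Kcv

variable (ρ lam : ℝ)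

theorem continuous_Kcv : Continuous (Kcv ρ lam) := by
  have ha : Continuous fun x => arctan (x / lam) := by fun_prop
  exact (continuous_const.mul ha).div (continuous_const.sub ha)
    fun x => (pi_div_two_sub_arctan_pos _).ne'

theorem hasDerivAt_Kcv (x : ℝ) :
    HasDerivAt (Kcv ρ lam)
      (ρ * (π / 2) * lam / ((lam ^ 2 + x ^ 2) * (π / 2 - arctan (x / lam)) ^ 2)) x := by
  have hu : π / 2 - arctan (x / lam) ≠ 0 := (pi_div_two_sub_arctan_pos _).ne'
  have ha := hasDerivAt_arctan_div lam x
  refine ((ha.const_mul ρ).div (ha.const_sub (π / 2)) hu).congr_deriv ?_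
  field_simp
  ring

theorem deriv_Kcv :
    deriv (Kcv ρ lam) = fun x =>
      ρ * (π / 2) * lam / ((lam ^ 2 + x ^ 2) * (π / 2 - arctan (x / lam)) ^ 2) :=
  funext fun x => (hasDerivAt_Kcv ρ lam x).deriv

variable {lam}

theorem hasDerivAt_deriv_Kcv (hlam : lam ≠ 0) (x : ℝ) :
    HasDerivAt (deriv (Kcv ρ lam))
      (ρ * π * lam * (π / 2 - arctan (x / lam)) * (lam - x * (π / 2 - arctan (x / lam))) /
        ((lam ^ 2 + x ^ 2) * (π / 2 - arctan (x / lam)) ^ 2) ^ 2) x := by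
  have hu : π / 2 - arctan (x / lam) ≠ 0 := (pi_div_two_sub_arctan_pos _).ne'
  have hd : lam ^ 2 + x ^ 2 ≠ 0 := by positivity
  have hw : HasDerivAt (fun x => (lam ^ 2 + x ^ 2) * (π / 2 - arctan (x / lam)) ^ 2)
      (-2 * (π / 2 - arctan (x / lam)) * (lam - x * (π / 2 - arctan (x / lam)))) x := by
    refine (((hasDerivAt_pow 2 x).const_add (lam ^ 2)).mul
      (((hasDerivAt_arctan_div lam x).const_sub (π / 2)).pow 2)).congr_deriv ?_
    simp only [Pi.pow_apply]
    field_simp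
    ring
  rw [deriv_Kcv]
  refine ((hasDerivAt_const x (ρ * (π / 2) * lam)).div hw
    (mul_ne_zero hd (pow_ne_zero 2 hu))).congr_deriv ?_
  ring

theorem deriv_deriv_Kcv_pos {x : ℝ} (hρ : 0 < ρ) (hlam : 0 < lam) (hx : 0 < x) :
    0 < deriv (deriv (Kcv ρ lam)) x := by
  have hu : 0 < π / 2 - arctan (x / lam) := pi_div_two_sub_arctan_pos _
  have hgap : 0 < lam - x * (π / 2 - arctan (x / lam)) :=
    sub_pos.2 (mul_pi_div_two_sub_arctan_div_lt hlam hx)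
  rw [(hasDerivAt_deriv_Kcv ρ hlam.ne' x).deriv]
  exact div_pos (mul_pos (mul_pos (by positivity) hu) hgap) (by positivity)

end Kcv

/-- `K_cv(x) = ρ * arctan(x/λ)/(π/2 - arctan(x/λ))` with `ρ, λ > 0` is strictly convex
on `(0,∞)`, i.e. its second derivative is strictly positive for all `x > 0`. -/
theorem Kcv_strictConvex (ρ lam : ℝ) (hρ : 0 < ρ) (hlam : 0 < lam) :
    StrictConvexOn ℝ (Set.Ioi (0 : ℝ))
      (fun x : ℝ => ρ * Real.arctan (x / lam) / (π / 2 - Real.arctan (x / lam))) ∧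
    ∀ x : ℝ, 0 < x →
      0 < deriv (deriv
        (fun x : ℝ => ρ * Real.arctan (x / lam) / (π / 2 - Real.arctan (x / lam)))) x := by
  have hpos : ∀ x : ℝ, 0 < x → 0 < deriv (deriv (Kcv ρ lam)) x :=
    fun _ hx => deriv_deriv_Kcv_pos ρ hρ hlam hx
  exact ⟨strictConvexOn_of_deriv2_pos' (convex_Ioi 0) (continuous_Kcv ρ lam).continuousOn hpos,
    hpos⟩
end

section
/- Consider ṡ = u + d with the integral sliding mode controller u = -φ(t) - K_bf(|e|)·sign(e), where e(t) = s(t) - z(t), ż(t) = -φ(t), z(0) = s(0), K_bf is class K∞, and |d(t)| ≤ d̄. Then |e(t)| ≤ σ₁ = K_bf⁻¹(d̄) for all t ≥ 0; moreover, if |z(t)| ≤ σ_z for all t ≥ t_f, then |s(t)| ≤ σ₁ + σ_z for all t ≥ t_f. -/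
/-!
With `e = s - z` the auxiliary state cancels the feedforward term `-φ`, leaving
`ė = -K(|e|) sign e + d`. Whenever `|e| > σ₁` the feedback `K(|e|) ≥ K(σ₁) = d̄` dominates the
disturbance, so `|e|` cannot grow there; since `e(0) = 0`, the band `|e| ≤ σ₁` is never left.
The bound on `s = e + z` is then the triangle inequality.
-/

open Real Set Filter

theorem le_of_hasDerivAt_nonpos_above {f f' : ℝ → ℝ} {a σ : ℝ} (ha : f a ≤ σ)
    (hf : ∀ t, a ≤ t → HasDerivAt f (f' t) t) (hf' : ∀ t, a ≤ t → σ < f t → f' t ≤ 0) :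
    ∀ t, a ≤ t → f t ≤ σ := by
  intro t hat
  have hc : 0 < t - a + 1 := by linarith
  -- Fence `f` by the line `σ + ε (x - a + 1)`, which starts strictly above `σ` and grows.
  have fence : ∀ ε > 0, f t ≤ σ + ε * (t - a + 1) := fun ε hε => by
    refine image_le_of_deriv_right_lt_deriv_boundary (B := fun x => σ + ε * (x - a + 1))
      (B' := fun _ => ε)
      (fun x hx => (hf x hx.1).continuousAt.continuousWithinAt)
      (fun x hx => (hf x hx.1).hasDerivWithinAt) (by linarith) (fun x => ?_) ?_ ⟨hat, le_rfl⟩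
    · simpa using (((hasDerivAt_id x).sub_const a).add_const 1).const_mul ε |>.const_add σ
    · intro x hx hfx
      have : σ < f x := by rw [hfx]; nlinarith [hx.1]
      exact (hf' x hx.1 this).trans_lt hε
  refine le_of_forall_pos_le_add fun δ hδ => ?_
  simpa [div_mul_cancel₀ δ hc.ne'] using fence (δ / (t - a + 1)) (div_pos hδ hc)

theorem le_of_hasDerivAt_slidingMode {K d e : ℝ → ℝ} {a σ : ℝ} (hK : MonotoneOn K (Ici 0))
    (hσ : 0 ≤ σ) (ha : e a ≤ σ) (hd : ∀ t, a ≤ t → d t ≤ K σ)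
    (he : ∀ t, a ≤ t → HasDerivAt e (-(K |e t| * sign (e t)) + d t) t) :
    ∀ t, a ≤ t → e t ≤ σ := by
  refine le_of_hasDerivAt_nonpos_above ha he fun t ht hσe => ?_
  have hpos : 0 < e t := hσ.trans_lt hσe
  rw [abs_of_pos hpos, sign_of_pos hpos, mul_one]
  linarith [hK hσ hpos.le hσe.le, hd t ht]

theorem abs_le_of_hasDerivAt_slidingMode {K d e : ℝ → ℝ} {a σ : ℝ} (hK : MonotoneOn K (Ici 0))
    (hσ : 0 ≤ σ) (ha : |e a| ≤ σ) (hd : ∀ t, a ≤ t → |d t| ≤ K σ)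
    (he : ∀ t, a ≤ t → HasDerivAt e (-(K |e t| * sign (e t)) + d t) t) :
    ∀ t, a ≤ t → |e t| ≤ σ := by
  -- The dynamics is odd: `-e` solves it with disturbance `-d`.
  have he_neg : ∀ t, a ≤ t → HasDerivAt (-e) (-(K |(-e) t| * sign ((-e) t)) + (-d) t) t :=
    fun t ht => ((he t ht).neg).congr_deriv (by simp only [Pi.neg_apply, abs_neg, sign_neg]; ring)
  intro t ht
  refine abs_le.2 ⟨neg_le.1 ?_, ?_⟩
  · exact le_of_hasDerivAt_slidingMode (d := -d) (e := -e) hK hσ (neg_le.1 (abs_le.1 ha).1)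
      (fun t ht => neg_le.1 (abs_le.1 (hd t ht)).1) he_neg t ht
  · exact le_of_hasDerivAt_slidingMode hK hσ (abs_le.1 ha).2 (fun t ht => (abs_le.1 (hd t ht)).2)
      he t ht

theorem integral_asmc_general (K : ℝ → ℝ)
    (hmono : StrictMonoOn K (Set.Ici 0))
    (d φ : ℝ → ℝ) (dbar : ℝ)
    (hd : ∀ t : ℝ, 0 ≤ t → |d t| ≤ dbar)
    (σ₁ : ℝ) (hσ₁ : 0 ≤ σ₁) (hσ₁K : K σ₁ = dbar)  -- σ₁ = K⁻¹(d̄)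
    (s z : ℝ → ℝ)
    (hz0 : z 0 = s 0)
    (hz : ∀ t : ℝ, 0 ≤ t → HasDerivAt z (-(φ t)) t)
    (hs : ∀ t : ℝ, 0 ≤ t →
      HasDerivAt s
        (-(φ t) - K |s t - z t| * Real.sign (s t - z t) + d t) t) :
    (∀ t : ℝ, 0 ≤ t → |s t - z t| ≤ σ₁) ∧
    (∀ σ_z t_f : ℝ, 0 ≤ t_f → (∀ t : ℝ, t_f ≤ t → |z t| ≤ σ_z) →
      ∀ t : ℝ, t_f ≤ t → |s t| ≤ σ₁ + σ_z) := by
  have herr : ∀ t, 0 ≤ t → |s t - z t| ≤ σ₁ :=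
    abs_le_of_hasDerivAt_slidingMode (e := fun t => s t - z t) hmono.monotoneOn hσ₁
      (by simp [hz0, hσ₁]) (fun t ht => hσ₁K ▸ hd t ht)
      fun t ht => ((hs t ht).sub (hz t ht)).congr_deriv (by ring)
  refine ⟨herr, fun σ_z t_f htf hzb t ht => ?_⟩
  calc |s t| = |(s t - z t) + z t| := by rw [sub_add_cancel]
    _ ≤ |s t - z t| + |z t| := abs_add_le _ _
    _ ≤ σ₁ + σ_z := add_le_add (herr t (htf.trans ht)) (hzb t ht)

/-- Barrier-function adaptive integral sliding mode control with auxiliary dynamics: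
the error `e = s - z` stays in `|e| ≤ σ₁ = K_bf⁻¹(d̄)` for all `t ≥ 0`, and if
`|z(t)| ≤ σ_z` for `t ≥ t_f`, then `|s(t)| ≤ σ₁ + σ_z` for `t ≥ t_f`. -/
theorem integral_asmc (K : ℝ → ℝ)
    (hmaps : ∀ x : ℝ, 0 ≤ x → 0 ≤ K x)
    (hcont : ContinuousOn K (Set.Ici 0))
    (hmono : StrictMonoOn K (Set.Ici 0))
    (hK0 : K 0 = 0)
    (htop : Tendsto K atTop atTop)
    (d φ : ℝ → ℝ) (dbar : ℝ) (hdbar : 0 < dbar)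
    (hdmeas : Measurable d) (hφmeas : Measurable φ)
    (hd : ∀ t : ℝ, 0 ≤ t → |d t| ≤ dbar)
    (σ₁ : ℝ) (hσ₁ : 0 ≤ σ₁) (hσ₁K : K σ₁ = dbar)  -- σ₁ = K⁻¹(d̄)
    (s z : ℝ → ℝ)
    (hz0 : z 0 = s 0)
    (hz : ∀ t : ℝ, 0 ≤ t → HasDerivAt z (-(φ t)) t)
    (hs : ∀ t : ℝ, 0 ≤ t →
      HasDerivAt s
        (-(φ t) - K |s t - z t| * Real.sign (s t - z t) + d t) t) :
    (∀ t : ℝ, 0 ≤ t → |s t - z t| ≤ σ₁) ∧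
    (∀ σ_z t_f : ℝ, 0 ≤ t_f → (∀ t : ℝ, t_f ≤ t → |z t| ≤ σ_z) →
      ∀ t : ℝ, t_f ≤ t → |s t| ≤ σ₁ + σ_z) :=
  integral_asmc_general K hmono d φ dbar hd σ₁ hσ₁ hσ₁K s z hz0 hz hs
end
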